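/- Let k be a field and consider variables (z, x, y) with z ∈ k, x ∈ k^{n+2}, y ∈ k^{n+2−h}, with coordinates x_0,…,x_{n+1} and y_0,…,y_{n+1−h}. The solution set of the system of equations: z(y_0 x_i − x_0 y_i) = 0 for 0 ≤ i ≤ n+1−h; x_{n+2−h} = x_{n+3−h} = ⋯ = x_{n+1} = 0; and x_i y_j − y_i x_j = 0 for 1 ≤ i, j ≤ n+1−h, equals the union F₁ ∪ F₂, where F₁ = { (z,x,y) : x_{n+2−h}=⋯=x_{n+1}=0 and (x_0,…,x_{n+1−h}) and (y_0,…,y_{n+1−h}) are linearly dependent } and F₂ = { (z,x,y) : z = 0, x_{n+2−h}=⋯=x_{n+1}=0, and (x_1,…,x_{n+1−h}) and (y_1,…,y_{n+1−h}) are linearly dependent }. -/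

import Mathlib

/-!
If `z ≠ 0`, it cancels (`k` is a field) and the first family of equations says that every
2×2 minor of `(x, y)` through the column `0` vanishes; together with the minors on the columns
`1, …, n+1−h` this is the vanishing of all minors, i.e. `F₁`. If `z = 0`, the first family is void and only `F₂` remains.
-/

theorem minors_eq_zero_iff_of_pivot {R ι : Type*} [CommRing R] (u v : ι → R) (i₀ : ι) :
    (∀ i j, u i * v j - u j * v i = 0) ↔
      (∀ i, v i₀ * u i - u i₀ * v i = 0) ∧
        ∀ i j, i ≠ i₀ → j ≠ i₀ → u i * v j - u j * v i = 0 := by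
  refine ⟨fun h => ⟨fun i => by linear_combination -h i₀ i, fun i j _ _ => h i j⟩, ?_⟩
  rintro ⟨hpivot, hrest⟩ i j
  by_cases hi : i = i₀
  · subst hi
    linear_combination -hpivot j
  by_cases hj : j = i₀
  · subst hj
    linear_combination hpivot i
  exact hrest i j hi hj

/-- The solution set of the system
`z(y_0 x_i − x_0 y_i) = 0 (0 ≤ i ≤ n+1−h)`, `x_{n+2−h} = ⋯ = x_{n+1} = 0`,
`x_i y_j − y_i x_j = 0 (1 ≤ i, j ≤ n+1−h)`
in `k × k^{n+2} × k^{n+2-h}` equals the union `F₁ ∪ F₂`, where `F₁` requires the tail of `x`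
to vanish and `(x_0,…,x_{n+1−h})`, `(y_0,…,y_{n+1−h})` to be linearly dependent (all 2×2 minors
vanish), and `F₂` requires `z = 0`, the tail of `x` to vanish, and `(x_1,…,x_{n+1−h})`,
`(y_1,…,y_{n+1−h})` to be linearly dependent. -/
theorem projection_graph_components
    (k : Type*) [Field k] (n h : ℕ) (h2 : h ≤ n) :
    {p : k × (Fin (n + 2) → k) × (Fin (n + 2 - h) → k) |
      (∀ i : Fin (n + 2 - h),
        p.1 * (p.2.2 ⟨0, by omega⟩ * p.2.1 (Fin.castLE (by omega) i)
          - p.2.1 ⟨0, by omega⟩ * p.2.2 i) = 0) ∧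
      (∀ i : Fin (n + 2), n + 2 - h ≤ (i : ℕ) → p.2.1 i = 0) ∧
      (∀ i j : Fin (n + 2 - h), 1 ≤ (i : ℕ) → 1 ≤ (j : ℕ) →
        p.2.1 (Fin.castLE (by omega) i) * p.2.2 j
          - p.2.2 i * p.2.1 (Fin.castLE (by omega) j) = 0)} =
    {p : k × (Fin (n + 2) → k) × (Fin (n + 2 - h) → k) |
      (∀ i : Fin (n + 2), n + 2 - h ≤ (i : ℕ) → p.2.1 i = 0) ∧
      (∀ i j : Fin (n + 2 - h),
        p.2.1 (Fin.castLE (by omega) i) * p.2.2 j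
          - p.2.1 (Fin.castLE (by omega) j) * p.2.2 i = 0)} ∪
    {p : k × (Fin (n + 2) → k) × (Fin (n + 2 - h) → k) |
      p.1 = 0 ∧
      (∀ i : Fin (n + 2), n + 2 - h ≤ (i : ℕ) → p.2.1 i = 0) ∧
      (∀ i j : Fin (n + 2 - h), 1 ≤ (i : ℕ) → 1 ≤ (j : ℕ) →
        p.2.1 (Fin.castLE (by omega) i) * p.2.2 j
          - p.2.1 (Fin.castLE (by omega) j) * p.2.2 i = 0)} := by
  ext ⟨z, x, y⟩
  have hpos : 0 < n + 2 - h := by omega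
  have one_le_iff (i : Fin (n + 2 - h)) : 1 ≤ (i : ℕ) ↔ i ≠ ⟨0, hpos⟩ := by
    simp only [ne_eq, Fin.ext_iff]
    omega
  have hminors := minors_eq_zero_iff_of_pivot (fun i => x (Fin.castLE (by omega) i)) y
    ⟨0, hpos⟩
  simp only [Set.mem_ofPred_eq, Set.mem_union, mul_eq_zero, forall_or_left, one_le_iff,
    mul_comm (y _)] at hminors ⊢
  rw [hminors]
  tauto
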